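/- arXiv:1712.07105 — 3 statements merged into one kernel-verified Lean document; each statement's English description precedes it below -/
import Mathlib

section
/- Let R be a commutative ring and x, y, z ∈ R with x⁴ + y⁴ + z⁴ = 0. Set X = -x³zy, Y = x²z³, Z = zxy³. Then Y²Z = X³ + XZ², i.e., the point (X : Y : Z) satisfies the projective Weierstrass equation y²z = x³ + xz². (This is the map φ₁ from the Fermat quartic x⁴+y⁴+z⁴=0 to the elliptic curve E⁰₁ : y²z = x³ + xz².) -/
theorem stmt_8 {R : Type*} [CommRing R] (x y z : R)
    (h : x ^ 4 + y ^ 4 + z ^ 4 = 0) :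
    (x ^ 2 * z ^ 3) ^ 2 * (z * x * y ^ 3) =
      (-(x ^ 3 * z * y)) ^ 3 + (-(x ^ 3 * z * y)) * (z * x * y ^ 3) ^ 2 := by
  linear_combination (x^5*y^3*z^3) * h
end

section
/- Let R be a commutative ring and x, y, z ∈ R satisfying the Klein model equation x⁴+y⁴+z⁴+6(xy³+yz³+zx³)-3(x²y²+y²z²+z²x²)+3xyz(x+y+z) = 0. Set X = -7(x+y+z)(3x-y-9z), Y = 196(-x²-3xy-xz+2z²), Z = (x+y+z)². Then Y²Z = X³ - 1715XZ² + 33614Z³. (This is the map φ₇ from the Klein quartic model C⁰₇ to the elliptic curve E⁰₇ : y²z = x³ - 1715xz² + 33614z³.) -/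
theorem stmt_9 {R : Type*} [CommRing R] (x y z : R)
    (h : x ^ 4 + y ^ 4 + z ^ 4 + 6 * (x * y ^ 3 + y * z ^ 3 + z * x ^ 3)
        - 3 * (x ^ 2 * y ^ 2 + y ^ 2 * z ^ 2 + z ^ 2 * x ^ 2)
        + 3 * (x * y * z) * (x + y + z) = 0) :
    (196 * (-x ^ 2 - 3 * (x * y) - x * z + 2 * z ^ 2)) ^ 2 * (x + y + z) ^ 2 =
      (-7 * ((x + y + z) * (3 * x - y - 9 * z))) ^ 3
        - 1715 * (-7 * ((x + y + z) * (3 * x - y - 9 * z))) * ((x + y + z) ^ 2) ^ 2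
        + 33614 * ((x + y + z) ^ 2) ^ 3 := by
  linear_combination (-21952*(x+y+z)^2) * h
end

section
/- There is no injective group homomorphism from the symmetric group S₄ into a product C × GL(2,ℂ) where C is any commutative group. (Equivalently: S₄ has no faithful complex representation all of whose irreducible constituents have degree at most 2.) -/
open scoped commutatorElement

lemma key_inv (M : Matrix (Fin 2) (Fin 2) ℂ) (h1 : M * M = 1) (h2 : M.det = 1) :
    M = 1 ∨ M = -1 := by
  set a := M 0 0 with ha
  set b := M 0 1 with hb
  set c := M 1 0 with hc
  set d := M 1 1 with hd
  have e1 : a * a + b * c = 1 := by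
    have := congrFun (congrFun h1 0) 0
    simpa [Matrix.mul_apply, Fin.sum_univ_two, Matrix.one_apply] using this
  have e2 : a * b + b * d = 0 := by
    have := congrFun (congrFun h1 0) 1
    simpa [Matrix.mul_apply, Fin.sum_univ_two, Matrix.one_apply, mul_comm] using this
  have e3 : c * a + d * c = 0 := by
    have := congrFun (congrFun h1 1) 0
    simpa [Matrix.mul_apply, Fin.sum_univ_two, Matrix.one_apply, mul_comm] using this
  have e5 : a * d - b * c = 1 := by
    rw [Matrix.det_fin_two] at h2
    simpa [← ha, ← hb, ← hc, ← hd] using h2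
  have hs : a * (a + d) = 2 := by linear_combination e1 + e5
  have hsne : a + d ≠ 0 := by
    intro h
    rw [h, mul_zero] at hs
    exact two_ne_zero hs.symm
  have hb0 : b = 0 := by
    have : b * (a + d) = 0 := by linear_combination e2
    exact (mul_eq_zero.mp this).resolve_right hsne
  have hc0 : c = 0 := by
    have : c * (a + d) = 0 := by linear_combination e3
    exact (mul_eq_zero.mp this).resolve_right hsne
  have ha2 : a * a = 1 := by linear_combination e1 - b * hc0
  have had : a * d = 1 := by linear_combination e5 + b * hc0
  have hda : d = a := by
    rcases mul_self_eq_one_iff.mp ha2 with h | h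
    · rw [h, one_mul] at had; rw [had, h]
    · rw [h] at had
      have : d = -1 := by linear_combination -had
      rw [this, h]
  have hMe : M = Matrix.of ![![a, b], ![c, d]] := by
    rw [ha, hb, hc, hd]
    exact Matrix.eta_fin_two M
  rcases mul_self_eq_one_iff.mp ha2 with h | h
  · left
    rw [hMe, hb0, hc0, hda, h]
    ext i j
    fin_cases i <;> fin_cases j <;> simp
  · right
    rw [hMe, hb0, hc0, hda, h]
    ext i j
    fin_cases i <;> fin_cases j <;> simp

lemma triv_comm {A : Type*} [CommGroup A] (g : Equiv.Perm (Fin 4) →* A)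
    (x y : Equiv.Perm (Fin 4)) : g ⁅x, y⁆ = 1 := by
  rw [map_commutatorElement]
  exact commutatorElement_eq_one_iff_commute.mpr (mul_comm _ _)

theorem stmt_14 (C : Type*) [CommGroup C]
    (f : Equiv.Perm (Fin 4) →* C × Matrix.GeneralLinearGroup (Fin 2) ℂ) :
    ¬ Function.Injective f := by
  intro hinj
  set a : Equiv.Perm (Fin 4) := Equiv.swap 0 1 * Equiv.swap 2 3 with ha
  set b : Equiv.Perm (Fin 4) := Equiv.swap 0 2 * Equiv.swap 1 3 with hb
  have hab : a ≠ b := by decide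
  have hca : a = ⁅(Equiv.swap 0 1 : Equiv.Perm (Fin 4)), Equiv.swap 0 2 * Equiv.swap 1 3⁆ := by
    decide
  have hcb : b = ⁅(Equiv.swap 0 2 : Equiv.Perm (Fin 4)), Equiv.swap 0 1 * Equiv.swap 2 3⁆ := by
    decide
  have hfst : ∀ x ∈ ({a, b} : Set _), (f x).1 = 1 := by
    intro x hx
    rcases hx with rfl | rfl
    · rw [hca]; exact triv_comm ((MonoidHom.fst _ _).comp f) _ _
    · rw [hcb]; exact triv_comm ((MonoidHom.fst _ _).comp f) _ _
  have hdet : ∀ x ∈ ({a, b} : Set _), ((f x).2 : Matrix (Fin 2) (Fin 2) ℂ).det = 1 := by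
    intro x hx
    have h : Matrix.GeneralLinearGroup.det ((MonoidHom.snd C _).comp f x) = 1 := by
      rcases hx with rfl | rfl
      · rw [hca]; exact triv_comm (Matrix.GeneralLinearGroup.det.comp ((MonoidHom.snd _ _).comp f)) _ _
      · rw [hcb]; exact triv_comm (Matrix.GeneralLinearGroup.det.comp ((MonoidHom.snd _ _).comp f)) _ _
    have := congrArg (Units.val) h
    simpa using this
  have hsq : ∀ x ∈ ({a, b} : Set _), ((f x).2 : Matrix (Fin 2) (Fin 2) ℂ) *
      ((f x).2 : Matrix (Fin 2) (Fin 2) ℂ) = 1 := by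
    intro x hx
    have hx2 : x * x = 1 := by rcases hx with rfl | rfl <;> decide
    have h2 : (f x).2 * (f x).2 = 1 := by
      rw [← Prod.snd_mul, ← map_mul, hx2, map_one, Prod.snd_one]
    have := congrArg Units.val h2
    simpa using this
  have hne1 : ∀ x ∈ ({a, b} : Set _), x ≠ 1 := by
    intro x hx; rcases hx with rfl | rfl <;> decide
  have hneg : ∀ x ∈ ({a, b} : Set _), ((f x).2 : Matrix (Fin 2) (Fin 2) ℂ) = -1 := by
    intro x hx
    rcases key_inv _ (hsq x hx) (hdet x hx) with h | h
    · exfalso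
      apply hne1 x hx
      apply hinj
      rw [map_one]
      apply Prod.ext
      · exact hfst x hx
      · exact Units.ext (by simpa using h)
    · exact h
  apply hab
  apply hinj
  apply Prod.ext
  · rw [hfst a (by left; rfl), hfst b (by right; rfl)]
  · exact Units.ext (by rw [hneg a (by left; rfl), hneg b (by right; rfl)])
end
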